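/- arXiv:1503.08790 — 4 statements merged into one kernel-verified Lean document; each statement's English description precedes it below -/
import Mathlib

section
/- For every integer h ≥ 0, the ordinary generating function of the probabilities q_n^{(h)} satisfies the identity (Σ_{n≥0} q_n^{(h)} z^n) · rev(U_{h+1})(z) = 2 z^h in the ring of formal power series ℚ⟦z⟧, where rev(U_{h+1})(z) = z^{h+1} U_{h+1}(1/z) denotes the reversed Chebyshev polynomial of the second kind of degree h+1 (the polynomial whose coefficient sequence is that of U_{h+1} reversed). Equivalently, the probability that a simple symmetric random walk of length n on ℤ stays in [0,h] and ends at h equals 2 [z^{n+1}] 1/U_{h+1}(1/z) for all h ≥ 0 and n ≥ 0. -/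
/-!
Let `F_m` be the generating function of the walks that stay in `[0, h]` and end at `m`, each
weighted by `2⁻ⁿ`. Splitting off the last step gives `2 F_m = 2 [m = 0] + z (F_{m+1} + F_{m-1})`
for `0 ≤ m ≤ h`, with `F_{-1} = F_{h+1} = 0`. Read downwards from the top level, this
three-term recurrence gives `z^j F_{h-j} = F_h · rev U_j(z)`, because `rev U_j` obeys
`rev U_{j+2} = 2 rev U_{j+1} - z² rev U_j`; the inhomogeneous equation at the bottom level
`m = 0` then turns into `F_h · rev U_{h+1} = 2 z^h`.
-/

/-- Partial sum `S_k` of the `±1`-walk encoded by `ε : Fin n → Bool`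
(`true` = step `+1`, `false` = step `-1`). -/
def walkSum (n : ℕ) (ε : Fin n → Bool) (k : ℕ) : ℤ :=
  ∑ i : Fin n, if (i : ℕ) < k then (if ε i then 1 else -1) else 0

/-- `W n h`: number of `±1`-paths of length `n` with `0 ≤ S_k ≤ h` for all `k` and `S_n = h`. -/
noncomputable def W (n h : ℕ) : ℕ :=
  Nat.card {ε : Fin n → Bool //
    (∀ k ≤ n, 0 ≤ walkSum n ε k ∧ walkSum n ε k ≤ (h : ℤ)) ∧ walkSum n ε n = (h : ℤ)}

/-- `g j` is the value at `z` of the reversed polynomial `rev U_j = X^j U_j(1/X)`. -/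
def IsReversedChebyshevU {A : Type*} [CommRing A] (z : A) (g : ℕ → A) : Prop :=
  g 0 = 1 ∧ g 1 = 2 ∧ ∀ j, g (j + 2) = 2 * g (j + 1) - z ^ 2 * g j

theorem IsReversedChebyshevU.map {A B : Type*} [CommRing A] [CommRing B] {z : A} {g : ℕ → A}
    (hg : IsReversedChebyshevU z g) (f : A →+* B) :
    IsReversedChebyshevU (f z) fun j => f (g j) := by
  obtain ⟨h0, h1, hrec⟩ := hg
  refine ⟨by simp [h0], by simp [h1, map_ofNat], fun j => ?_⟩
  simp [hrec, map_ofNat]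

namespace Polynomial

variable {R : Type*} [Semiring R]

theorem reflect_add_one_X_mul {p : R[X]} {N : ℕ} (hp : p.natDegree ≤ N) :
    reflect (N + 1) (X * p) = reflect N p := by
  simpa [add_comm] using reflect_mul X p natDegree_X_le hp

theorem reflect_add_eq_X_pow_mul {p : R[X]} {N : ℕ} (hp : p.natDegree ≤ N) (k : ℕ) :
    reflect (N + k) p = X ^ k * reflect N p := by
  simpa [add_comm] using reflect_mul 1 p (natDegree_one.trans_le (Nat.zero_le k)) hp

end Polynomial

open Polynomial Polynomial.Chebyshev in
theorem isReversedChebyshevU_reverse_U {R : Type*} [CommRing R] [IsDomain R] [NeZero (2 : R)] :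
    IsReversedChebyshevU (X : R[X]) fun j => (U R j).reverse := by
  have hd (n : ℕ) : (U R n).natDegree ≤ n := (natDegree_U_natCast R n).le
  have hrev (n : ℕ) : (U R n).reverse = reflect n (U R n) := by
    rw [reverse, natDegree_U_natCast]
  refine ⟨by simpa using reverse_C (1 : R), ?_, fun j => ?_⟩
  · simp only [Nat.cast_one, U_one, reverse_mul_X, ← C_ofNat, reverse_C]
  have h2 := hrev (j + 2)
  have h1 := hrev (j + 1)
  have hd1 := hd (j + 1)
  push_cast at h2 h1 hd1 ⊢
  rw [h2, h1, hrev, U_add_two, reflect_sub, mul_assoc, ← C_ofNat, reflect_C_mul,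
    reflect_add_one_X_mul hd1, reflect_add_eq_X_pow_mul (hd j)]

namespace IsReversedChebyshevU

variable {A : Type*} [CommRing A] {z : A} {g : ℕ → A} {a : ℕ → A} {n : ℕ}

theorem pow_mul_eq_mul_of_recurrence (hg : IsReversedChebyshevU z g) (ha0 : a 0 = 0)
    (ha : ∀ j < n, 2 * a (j + 1) = z * (a j + a (j + 2))) :
    ∀ k ≤ n, z ^ k * a (k + 1) = a 1 * g k := by
  obtain ⟨hg0, hg1, hrec⟩ := hg
  intro k
  induction k using Nat.twoStepInduction with
  | zero => simp [hg0]
  | one =>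
    intro h1
    have := ha 0 h1
    rw [ha0] at this
    rw [hg1]
    linear_combination -this
  | more k ih₀ ih₁ =>
    intro hk
    have := ha (k + 1) (by omega)
    rw [hrec]
    linear_combination (-z ^ (k + 1)) * this + 2 * ih₁ (by omega) - z ^ 2 * ih₀ (by omega)

theorem mul_eq_pow_mul_of_recurrence (hg : IsReversedChebyshevU z g) (ha0 : a 0 = 0)
    (ha : ∀ j < n, 2 * a (j + 1) = z * (a j + a (j + 2))) {c : A}
    (hbot : 2 * a (n + 1) = c + z * a n) : a 1 * g (n + 1) = z ^ n * c := by
  have ladder := hg.pow_mul_eq_mul_of_recurrence ha0 ha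
  obtain ⟨-, hg1, hrec⟩ := hg
  cases n with
  | zero =>
    rw [ha0] at hbot
    rw [hg1]
    linear_combination hbot
  | succ m =>
    rw [hrec]
    linear_combination z ^ 2 * ladder m m.le_succ - 2 * ladder (m + 1) le_rfl + z ^ (m + 1) * hbot

end IsReversedChebyshevU

theorem walkSum_snoc {n : ℕ} (ε : Fin n → Bool) (b : Bool) (k : ℕ) :
    walkSum (n + 1) (Fin.snoc ε b) k =
      walkSum n ε k + if n < k then (if b then 1 else -1) else 0 := by
  simp [walkSum, Fin.sum_univ_castSucc]

theorem walkSum_of_le {n k : ℕ} (ε : Fin n → Bool) (hk : n ≤ k) :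
    walkSum n ε k = walkSum n ε n := by
  unfold walkSum
  refine Finset.sum_congr rfl fun i _ => ?_
  simp [i.isLt, i.isLt.trans_le hk]

def IsConfinedWalk (h : ℕ) (m : ℤ) {n : ℕ} (ε : Fin n → Bool) : Prop :=
  (∀ k ≤ n, 0 ≤ walkSum n ε k ∧ walkSum n ε k ≤ (h : ℤ)) ∧ walkSum n ε n = m

theorem isConfinedWalk_snoc_iff {h : ℕ} {m : ℤ} (hm : 0 ≤ m ∧ m ≤ h) {n : ℕ}
    (ε : Fin n → Bool) (b : Bool) :
    IsConfinedWalk h m (Fin.snoc ε b) ↔ IsConfinedWalk h (m - if b then 1 else -1) ε := by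
  have hinit (k : ℕ) (hk : k ≤ n) : walkSum (n + 1) (Fin.snoc ε b) k = walkSum n ε k := by
    simp [walkSum_snoc, hk.not_gt]
  have hlast : walkSum (n + 1) (Fin.snoc ε b) (n + 1) = walkSum n ε n + if b then 1 else -1 := by
    simp [walkSum_snoc, walkSum_of_le ε n.le_succ]
  constructor
  · rintro ⟨hbound, hend⟩
    exact ⟨fun k hk => hinit k hk ▸ hbound k (by omega), by linarith⟩
  · rintro ⟨hbound, hend⟩
    have hend' : walkSum (n + 1) (Fin.snoc ε b) (n + 1) = m := by rw [hlast, hend]; ring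
    refine ⟨fun k hk => ?_, hend'⟩
    rcases Nat.lt_or_ge n k with hnk | hkn
    · obtain rfl : k = n + 1 := by omega
      exact hend' ▸ hm
    · exact hinit k hkn ▸ hbound k hkn

theorem isConfinedWalk_zero_iff {h : ℕ} {m : ℤ} (ε : Fin 0 → Bool) :
    IsConfinedWalk h m ε ↔ m = 0 := by
  simp [IsConfinedWalk, walkSum, @eq_comm _ (0 : ℤ)]

theorem IsConfinedWalk.mem_Icc {h : ℕ} {m : ℤ} {n : ℕ} {ε : Fin n → Bool}
    (hε : IsConfinedWalk h m ε) : m ∈ Set.Icc (0 : ℤ) h :=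
  hε.2 ▸ hε.1 n le_rfl

noncomputable def walkCount (h n : ℕ) (m : ℤ) : ℕ :=
  Nat.card {ε : Fin n → Bool // IsConfinedWalk h m ε}

theorem walkCount_eq_zero {h n : ℕ} {m : ℤ} (hm : ¬ (0 ≤ m ∧ m ≤ h)) :
    walkCount h n m = 0 :=
  Nat.card_eq_zero.mpr (.inl ⟨fun ε => hm ε.2.mem_Icc⟩)

theorem walkCount_zero (h : ℕ) (m : ℤ) : walkCount h 0 m = if m = 0 then 1 else 0 := by
  split_ifs with hm <;> simp [walkCount, isConfinedWalk_zero_iff, hm]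

theorem walkCount_succ {h : ℕ} {m : ℤ} (hm : 0 ≤ m ∧ m ≤ h) (n : ℕ) :
    walkCount h (n + 1) m = walkCount h n (m - 1) + walkCount h n (m + 1) := by
  calc walkCount h (n + 1) m
      = Nat.card {p : Bool × (Fin n → Bool) // IsConfinedWalk h m (Fin.snoc p.2 p.1)} :=
        Nat.card_congr ((Fin.snocEquiv fun _ => Bool).subtypeEquiv fun _ => Iff.rfl).symm
    _ = ∑ b, Nat.card {ε : Fin n → Bool // IsConfinedWalk h m (Fin.snoc ε b)} := by
        rw [Nat.card_congr (Equiv.subtypeProdEquivSigmaSubtype fun b ε =>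
          IsConfinedWalk h m (Fin.snoc ε b)), Nat.card_sigma]
    _ = _ := by simp [isConfinedWalk_snoc_iff hm, walkCount]

section WalkGF

open PowerSeries

noncomputable def walkGF (h : ℕ) (m : ℤ) : ℚ⟦X⟧ :=
  mk fun n => (walkCount h n m : ℚ) / 2 ^ n

theorem walkGF_eq_zero {h : ℕ} {m : ℤ} (hm : ¬ (0 ≤ m ∧ m ≤ h)) : walkGF h m = 0 := by
  ext n
  simp [walkGF, walkCount_eq_zero hm]

theorem two_mul_walkGF {h : ℕ} {m : ℤ} (hm : 0 ≤ m ∧ m ≤ h) :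
    2 * walkGF h m = (if m = 0 then 2 else 0) + X * (walkGF h (m + 1) + walkGF h (m - 1)) := by
  rw [← map_ofNat C, ← map_zero C, ← apply_ite C]
  ext (_ | n)
  · split_ifs <;> simp [walkGF, walkCount_zero, *]
  · simp only [coeff_C_mul, walkGF, coeff_mk, walkCount_succ hm, Nat.cast_add, map_add,
      coeff_succ_C, coeff_succ_X_mul, zero_add]
    field_simp
    ring

end WalkGF

/-- The generating function of the probabilities `q_n^{(h)} = W(n,h)/2^n` multiplied by the
reversed Chebyshev polynomial of the second kind of degree `h+1` equals `2 z^h` in `ℚ⟦z⟧`. -/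
theorem ogf_q_mul_rev_chebyshevU (h : ℕ) :
    (PowerSeries.mk fun n => (W n h : ℚ) / 2 ^ n) *
      ((Polynomial.Chebyshev.U ℚ ((h : ℤ) + 1)).reverse : PowerSeries ℚ) =
      2 * PowerSeries.X ^ h := by
  have hg : IsReversedChebyshevU (PowerSeries.X : PowerSeries ℚ)
      fun j => ((Polynomial.Chebyshev.U ℚ j).reverse : PowerSeries ℚ) := by
    simpa using isReversedChebyshevU_reverse_U.map
      (Polynomial.coeToPowerSeries.ringHom (R := ℚ))
  have key := hg.mul_eq_pow_mul_of_recurrence (a := fun j => walkGF h (h + 1 - j)) (n := h)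
    (c := 2) (walkGF_eq_zero (by omega)) ?_ ?_
  · simp only [Nat.cast_one, Nat.cast_add, add_sub_cancel_right] at key
    rw [mul_comm 2, ← key]
    rfl
  · intro j hj
    have e := two_mul_walkGF (h := h) (m := h - j) (by omega)
    rw [if_neg (by omega), zero_add] at e
    push_cast
    ring_nf at e ⊢
    exact e
  · have e := two_mul_walkGF (h := h) (m := 0) (by omega)
    rw [zero_sub, if_pos rfl, walkGF_eq_zero (m := -1) (by omega), add_zero] at e
    push_cast
    ring_nf at e ⊢
    exact e
end

section
/- For every integer h ≥ 0 and every integer n ≥ 1, the probability p_n^{(h)} equals the coefficient of z^n in the formal power series 2 z^h · (rev(T_{h+1})(z))^{-1} ∈ ℚ⟦z⟧, where rev(T_{h+1})(z) = z^{h+1} T_{h+1}(1/z) denotes the reversed Chebyshev polynomial of the first kind of degree h+1 (invertible in ℚ⟦z⟧ since its constant term is the leading coefficient 2^h of T_{h+1}). Equivalently, the probability that the random walk of length n on ℕ₀ with reflecting barrier at 0 stays in [0,h] and ends at h equals 2 [z^{n+1}] 1/T_{h+1}(1/z) for h ≥ 0 and n ≥ 1. -/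
/-- `V n h`: number of `±1`-paths of length `n` with `|S_k| ≤ h` for all `k` and `|S_n| = h`. -/
noncomputable def V (n h : ℕ) : ℕ :=
  Nat.card {ε : Fin n → Bool //
    (∀ k ≤ n, |walkSum n ε k| ≤ (h : ℤ)) ∧ |walkSum n ε n| = (h : ℤ)}

/-!
Let `N_n(s)` count the walks of length `n` that stay in `[-h, h]` and end at `s`, and let
`Q_s = ∑ₙ N_n(s) (z/2)ⁿ`. Splitting off the last step gives `2 Q_s = z (Q_{s-1} + Q_{s+1})` for
`0 < s ≤ h`, `Q_{h+1} = 0` and, by the symmetry `s ↦ -s`, `Q_0 = 1 + z Q_1`. Running the three-term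
recurrence down from `s = h` gives `z^m Q_{h-m} = rev(U_m) Q_h`, since the reversed Chebyshev
polynomials `rev(U_m) = z^m U_m(1/z)` satisfy the same recurrence. As
`T_{h+1} = X U_h - U_{h-1}`, substituting into `Q_0 = 1 + z Q_1` yields `rev(T_{h+1}) Q_h = z^h`.
Finally `V(n, h) = 2 N_n(h)` for `h > 0`, pairing each walk with its mirror image.
-/

open Polynomial.Chebyshev
open scoped Polynomial PowerSeries

section Walks

variable {n : ℕ}

theorem walkSum_zero (ε : Fin 0 → Bool) (k : ℕ) : walkSum 0 ε k = 0 := by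
  simp [walkSum]

theorem walkSum_snoc_of_le (ε : Fin n → Bool) (b : Bool) {k : ℕ} (hk : k ≤ n) :
    walkSum (n + 1) (Fin.snoc ε b) k = walkSum n ε k := by
  simp only [walkSum, Fin.sum_univ_castSucc, Fin.snoc_castSucc, Fin.val_castSucc, Fin.snoc_last,
    Fin.val_last]
  rw [if_neg (by omega), add_zero]

theorem walkSum_snoc_self (ε : Fin n → Bool) (b : Bool) :
    walkSum (n + 1) (Fin.snoc ε b) (n + 1) = walkSum n ε n + if b then 1 else -1 := by
  simp only [walkSum, Fin.sum_univ_castSucc, Fin.snoc_castSucc, Fin.val_castSucc, Fin.snoc_last,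
    Fin.val_last, lt_add_one, if_true]
  congr 1
  refine Finset.sum_congr rfl fun i _ => ?_
  simp [i.isLt, Nat.lt_succ_of_lt i.isLt]

theorem walkSum_not (ε : Fin n → Bool) (k : ℕ) :
    walkSum n (fun i => !ε i) k = -walkSum n ε k := by
  simp only [walkSum, ← Finset.sum_neg_distrib]
  refine Finset.sum_congr rfl fun i _ => ?_
  split_ifs <;> simp_all

def IsBoundedWalk (h n : ℕ) (ε : Fin n → Bool) : Prop :=
  ∀ k ≤ n, |walkSum n ε k| ≤ (h : ℤ)

theorem isBoundedWalk_snoc_iff {h : ℕ} (ε : Fin n → Bool) (b : Bool) :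
    IsBoundedWalk h (n + 1) (Fin.snoc ε b) ↔
      IsBoundedWalk h n ε ∧ |walkSum n ε n + if b then 1 else -1| ≤ (h : ℤ) := by
  constructor
  · intro hε
    refine ⟨fun k hk => ?_, walkSum_snoc_self ε b ▸ hε (n + 1) le_rfl⟩
    simpa only [walkSum_snoc_of_le ε b hk] using hε k (by omega)
  · rintro ⟨hε, hlast⟩ k hk
    rcases Nat.lt_or_eq_of_le hk with hk | rfl
    · rw [walkSum_snoc_of_le ε b (by omega)]
      exact hε k (by omega)
    · rwa [walkSum_snoc_self]

theorem IsBoundedWalk.not {h : ℕ} {ε : Fin n → Bool} (hε : IsBoundedWalk h n ε) :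
    IsBoundedWalk h n (fun i => !ε i) := fun k hk => by
  rw [walkSum_not, abs_neg]
  exact hε k hk

noncomputable def boundedWalkCount (h n : ℕ) (s : ℤ) : ℕ :=
  Nat.card {ε : Fin n → Bool // IsBoundedWalk h n ε ∧ walkSum n ε n = s}

variable {h : ℕ}

theorem boundedWalkCount_zero (s : ℤ) :
    boundedWalkCount h 0 s = if s = 0 then 1 else 0 := by
  have : Unique (Fin 0 → Bool) := Pi.uniqueOfIsEmpty _
  have hbdd (ε : Fin 0 → Bool) : IsBoundedWalk h 0 ε := fun k _ => by simp [walkSum_zero]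
  split_ifs with hs <;> simp [boundedWalkCount, walkSum_zero, hbdd, hs, eq_comm]

theorem boundedWalkCount_eq_zero_of_lt_abs {s : ℤ} (hs : (h : ℤ) < |s|) :
    boundedWalkCount h n s = 0 :=
  Nat.card_eq_zero.mpr <| .inl ⟨fun ⟨_, hε, hend⟩ => (hs.trans_le (hend ▸ hε n le_rfl)).false⟩

theorem boundedWalkCount_neg (s : ℤ) :
    boundedWalkCount h n (-s) = boundedWalkCount h n s := by
  refine Nat.card_congr
    { toFun := fun ε => ⟨fun i => !ε.1 i, ε.2.1.not, by rw [walkSum_not, ε.2.2, neg_neg]⟩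
      invFun := fun ε => ⟨fun i => !ε.1 i, ε.2.1.not, by rw [walkSum_not, ε.2.2]⟩
      left_inv := fun ε => by simp
      right_inv := fun ε => by simp }

theorem boundedWalkCount_succ {s : ℤ} (hs : |s| ≤ (h : ℤ)) :
    boundedWalkCount h (n + 1) s = boundedWalkCount h n (s - 1) + boundedWalkCount h n (s + 1) := by
  have hsnoc (b : Bool) (ε : Fin n → Bool) :
      (IsBoundedWalk h (n + 1) (Fin.snoc ε b) ∧ walkSum (n + 1) (Fin.snoc ε b) (n + 1) = s) ↔
        IsBoundedWalk h n ε ∧ walkSum n ε n = s - if b then 1 else -1 := by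
    rw [isBoundedWalk_snoc_iff, walkSum_snoc_self, eq_sub_iff_add_eq]
    constructor
    · exact fun ⟨⟨hε, _⟩, hend⟩ => ⟨hε, hend⟩
    · exact fun ⟨hε, hend⟩ => ⟨⟨hε, hend ▸ hs⟩, hend⟩
  have e : {ε' : Fin (n + 1) → Bool //
        IsBoundedWalk h (n + 1) ε' ∧ walkSum (n + 1) ε' (n + 1) = s} ≃
      Σ b : Bool, {ε : Fin n → Bool //
        IsBoundedWalk h n ε ∧ walkSum n ε n = s - if b then 1 else -1} :=
    ((Fin.snocEquiv fun _ => Bool).subtypeEquiv fun x => (hsnoc x.1 x.2).symm).symm.trans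
      (Equiv.subtypeProdEquivSigmaSubtype fun b ε => _)
  rw [boundedWalkCount, Nat.card_congr e, Nat.card_sigma, Fintype.sum_bool]
  simp only [if_true, Bool.false_eq_true, if_false, sub_neg_eq_add]
  rfl

theorem V_eq_two_mul_boundedWalkCount (hh : 0 < h) : V n h = 2 * boundedWalkCount h n h := by
  classical
  have e : {ε : Fin n → Bool // (∀ k ≤ n, |walkSum n ε k| ≤ (h : ℤ)) ∧ |walkSum n ε n| = (h : ℤ)} ≃
      {ε // IsBoundedWalk h n ε ∧ walkSum n ε n = h} ⊕
        {ε // IsBoundedWalk h n ε ∧ walkSum n ε n = -h} :=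
    (Equiv.subtypeEquivRight fun ε => by rw [abs_eq (by positivity), and_or_left]; rfl).trans
      (subtypeOrEquiv _ _ <| Pi.disjoint_iff.mpr fun ε =>
        Prop.disjoint_iff.mpr fun ⟨⟨_, hpos⟩, ⟨_, hneg⟩⟩ => by omega)
  rw [V, Nat.card_congr e, Nat.card_sum, two_mul]
  exact congrArg _ (boundedWalkCount_neg _)

theorem V_zero_of_pos (hn : 0 < n) : V n 0 = 0 := by
  obtain ⟨m, rfl⟩ := Nat.exists_eq_add_one.mpr hn
  have hV : V (m + 1) 0 = boundedWalkCount 0 (m + 1) 0 :=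
    Nat.card_congr <| Equiv.subtypeEquivRight fun ε => by simp [IsBoundedWalk]
  rw [hV, boundedWalkCount_succ le_rfl, boundedWalkCount_eq_zero_of_lt_abs (by norm_num),
    boundedWalkCount_eq_zero_of_lt_abs (by norm_num)]

end Walks

section Reflect

open Polynomial

variable {R : Type*} [Semiring R] {p : R[X]} {N : ℕ}

theorem reflect_X_mul_succ (hp : p.natDegree ≤ N) : (X * p).reflect (N + 1) = p.reflect N := by
  rw [add_comm, reflect_mul _ _ natDegree_X_le hp, ← pow_one X, reflect_monomial, revAt_le le_rfl,
    Nat.sub_self, pow_zero, one_mul]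

theorem reflect_add_of_natDegree_le (hp : p.natDegree ≤ N) (k : ℕ) :
    p.reflect (N + k) = X ^ k * p.reflect N := by
  rw [add_comm, ← one_mul p, reflect_mul _ _ (by simp) hp, reflect_one, one_mul]

end Reflect

section Chebyshev

open Polynomial

variable {R : Type*} [CommRing R]

theorem natDegree_U_natCast_le : ∀ m : ℕ, (U R m).natDegree ≤ m
  | 0 => by simp
  | 1 => by rw [Nat.cast_one, U_one]; compute_degree
  | m + 2 => by
    have h2X : (2 * X : R[X]).natDegree ≤ 1 := by compute_degree
    have hdeg := natDegree_sub_le_of_le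
      (natDegree_mul_le_of_le h2X (natDegree_U_natCast_le (m + 1)))
      ((natDegree_U_natCast_le m).trans (by omega : m ≤ 1 + (m + 1)))
    push_cast at hdeg ⊢
    rw [U_add_two]
    omega

theorem reflect_X_mul_U (m : ℕ) : (X * U R m).reflect (m + 1) = (U R m).reflect m :=
  reflect_X_mul_succ (natDegree_U_natCast_le m)

theorem reflect_U_add_two (m : ℕ) :
    (U R (m + 2)).reflect (m + 2) =
      2 * (U R (m + 1)).reflect (m + 1) - X ^ 2 * (U R m).reflect m := by
  have hX := reflect_X_mul_U (R := R) (m + 1)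
  push_cast at hX
  rw [U_add_two, reflect_sub, mul_assoc, ← C_ofNat, reflect_C_mul, C_ofNat, hX,
    reflect_add_of_natDegree_le (natDegree_U_natCast_le m)]

theorem reverse_T_add_two [IsDomain R] [NeZero (2 : R)] (m : ℕ) :
    (T R (m + 2)).reverse = (U R (m + 1)).reflect (m + 1) - X ^ 2 * (U R m).reflect m := by
  have hX := reflect_X_mul_U (R := R) (m + 1)
  push_cast at hX
  rw [reverse, natDegree_T, T_eq_X_mul_U_sub_U, reflect_sub,
    show ((m : ℤ) + 2).natAbs = m + 2 by omega, hX,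
    reflect_add_of_natDegree_le (natDegree_U_natCast_le m)]

end Chebyshev

@[simp, norm_cast]
theorem Polynomial.coe_ofNat {R : Type*} [CommSemiring R] (n : ℕ) [n.AtLeastTwo] :
    ((ofNat(n) : R[X]) : R⟦X⟧) = ofNat(n) :=
  map_ofNat Polynomial.coeToPowerSeries.ringHom n

section Recurrence

open PowerSeries

variable {R : Type*} [CommRing R]

theorem X_pow_mul_eq_reflect_U_mul {q : ℤ → R⟦X⟧} {h : ℕ} (htop : q (h + 1) = 0)
    (hrec : ∀ j : ℤ, 1 ≤ j → j ≤ h → 2 * q j = X * (q (j - 1) + q (j + 1))) :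
    ∀ m ≤ h, X ^ m * q (h - m) = ((U R m).reflect m : R⟦X⟧) * q h := by
  intro m
  induction m using Nat.twoStepInduction with
  | zero => simp
  | one =>
    intro h1
    have := hrec h (by omega) le_rfl
    rw [htop, add_zero] at this
    have h2 : (2 * Polynomial.X : R[X]).reflect 1 = 2 := by
      rw [← Polynomial.C_ofNat, ← pow_one Polynomial.X, Polynomial.reflect_C_mul_X_pow,
        Polynomial.revAt_le le_rfl, Nat.sub_self, pow_zero, mul_one]
    rw [pow_one, Nat.cast_one, U_one, h2, ← this, Polynomial.coe_ofNat]
  | more m ih1 ih2 =>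
    intro hm
    have key := hrec (h - (m + 1)) (by omega) (by omega)
    rw [sub_sub, sub_add, show (m + 1 : ℤ) + 1 = m + 2 by ring, add_sub_cancel_right] at key
    have e := congrArg ((↑) : R[X] → R⟦X⟧) (reflect_U_add_two (R := R) m)
    specialize ih1 (by omega)
    specialize ih2 (by omega)
    push_cast at ih1 ih2 e key ⊢
    rw [e]
    linear_combination (-X ^ (m + 1)) * key + 2 * ih2 - X ^ 2 * ih1

end Recurrence

section GeneratingFunction

open PowerSeries

variable {h : ℕ}

noncomputable def boundedWalkSeries (h : ℕ) (s : ℤ) : ℚ⟦X⟧ :=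
  mk fun n => (boundedWalkCount h n s : ℚ) / 2 ^ n

theorem boundedWalkSeries_eq_zero_of_lt_abs {s : ℤ} (hs : (h : ℤ) < |s|) :
    boundedWalkSeries h s = 0 := by
  ext n
  simp [boundedWalkSeries, boundedWalkCount_eq_zero_of_lt_abs hs]

theorem boundedWalkSeries_neg (s : ℤ) : boundedWalkSeries h (-s) = boundedWalkSeries h s := by
  simp [boundedWalkSeries, boundedWalkCount_neg]

theorem coeff_succ_boundedWalkSeries {s : ℤ} (hs : |s| ≤ (h : ℤ)) (n : ℕ) :
    2 * coeff (n + 1) (boundedWalkSeries h s) =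
      coeff n (boundedWalkSeries h (s - 1)) + coeff n (boundedWalkSeries h (s + 1)) := by
  simp only [boundedWalkSeries, coeff_mk, boundedWalkCount_succ hs, pow_succ]
  push_cast
  field_simp

theorem two_mul_boundedWalkSeries {s : ℤ} (hs0 : s ≠ 0) (hs : |s| ≤ (h : ℤ)) :
    2 * boundedWalkSeries h s =
      X * (boundedWalkSeries h (s - 1) + boundedWalkSeries h (s + 1)) := by
  ext (_ | n)
  · simp [boundedWalkSeries, boundedWalkCount_zero, hs0]
  · rw [← map_ofNat (PowerSeries.C (R := ℚ)), coeff_C_mul, coeff_succ_X_mul, map_add,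
      coeff_succ_boundedWalkSeries hs]

theorem boundedWalkSeries_zero : boundedWalkSeries h 0 = 1 + X * boundedWalkSeries h 1 := by
  ext (_ | n)
  · simp [boundedWalkSeries, boundedWalkCount_zero]
  · have := coeff_succ_boundedWalkSeries (h := h) (s := 0) (by simp) n
    rw [zero_sub, zero_add, boundedWalkSeries_neg] at this
    rw [map_add, coeff_succ_X_mul, coeff_one, if_neg n.succ_ne_zero, zero_add]
    linarith

theorem reverse_T_mul_boundedWalkSeries (hh : 0 < h) :
    ((T ℚ (h + 1)).reverse : ℚ⟦X⟧) * boundedWalkSeries h h = X ^ h := by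
  obtain ⟨g, rfl⟩ := Nat.exists_eq_add_one.mpr hh
  have hrec := X_pow_mul_eq_reflect_U_mul (q := boundedWalkSeries (g + 1)) (h := g + 1)
    (boundedWalkSeries_eq_zero_of_lt_abs (by rw [abs_of_nonneg (by positivity)]; omega))
    fun j hj1 hjh =>
      two_mul_boundedWalkSeries (by omega) (by rw [abs_of_nonneg (by omega)]; exact hjh)
  have hQ0 := hrec (g + 1) le_rfl
  have hQ1 := hrec g (by omega)
  rw [sub_self] at hQ0
  rw [show ((g + 1 : ℕ) : ℤ) - g = 1 by push_cast; ring] at hQ1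
  have hrev := congrArg ((↑) : ℚ[X] → ℚ⟦X⟧) (reverse_T_add_two (R := ℚ) g)
  push_cast at hrev hQ0 hQ1 ⊢
  rw [show (g : ℤ) + 1 + 1 = g + 2 by ring, hrev]
  linear_combination (-1 : ℚ⟦X⟧) * hQ0 + X ^ (g + 1) * boundedWalkSeries_zero + X ^ 2 * hQ1

end GeneratingFunction

/-- The probability `p_n^{(h)} = V(n,h)/2^n` that the reflected random walk of length `n ≥ 1`
on `ℕ₀` is admissible of height `h` equals the coefficient of `z^n` in
`2 z^h / rev(T_{h+1})(z)`, where `rev(T_{h+1})(z) = z^{h+1} T_{h+1}(1/z)`. -/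
theorem prob_p_eq_coeff_inv_rev_chebyshevT (h n : ℕ) (hn : 1 ≤ n) :
    (V n h : ℚ) / 2 ^ n =
      PowerSeries.coeff (R := ℚ) n
        (2 * PowerSeries.X ^ h *
          (((Polynomial.Chebyshev.T ℚ ((h : ℤ) + 1)).reverse : PowerSeries ℚ))⁻¹) := by
  rcases Nat.eq_zero_or_pos h with rfl | hh
  · have hT : (T ℚ ((0 : ℕ) + 1)).reverse = 1 := by
      rw [Nat.cast_zero, zero_add, T_one, ← mul_one Polynomial.X, Polynomial.reverse_X_mul,
        ← Polynomial.C_1, Polynomial.reverse_C]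
    rw [V_zero_of_pos hn, hT, Polynomial.coe_one, inv_one, pow_zero, mul_one, mul_one,
      ← map_ofNat (PowerSeries.C (R := ℚ)), PowerSeries.coeff_C, if_neg (by omega)]
    simp
  · have hunit : PowerSeries.constantCoeff ((T ℚ (h + 1)).reverse : ℚ⟦X⟧) ≠ 0 := by
      rw [Polynomial.constantCoeff_coe, Polynomial.coeff_zero_reverse]
      exact Polynomial.leadingCoeff_ne_zero.mpr (T_ne_zero _ _)
    have hseries : 2 * PowerSeries.X ^ h * ((T ℚ (h + 1)).reverse : ℚ⟦X⟧)⁻¹ =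
        2 * boundedWalkSeries h h := by
      refine ((PowerSeries.eq_mul_inv_iff_mul_eq hunit).mpr ?_).symm
      rw [mul_assoc, mul_comm (boundedWalkSeries h h), reverse_T_mul_boundedWalkSeries hh]
    rw [hseries, V_eq_two_mul_boundedWalkCount hh, ← map_ofNat (PowerSeries.C (R := ℚ)),
      PowerSeries.coeff_C_mul, boundedWalkSeries, PowerSeries.coeff_mk]
    push_cast
    ring
end

section
/- For all integers n ≥ 0 and h ≥ 0 with h ≡ n (mod 2), the number W(n,h) of ±1-paths of length n with 0 ≤ S_k ≤ h for all k and S_n = h satisfies W(n,h) = Σ_{k ≥ 0, (h+2)(2k+1) ≤ n+2} (((h+2)²(2k+1)² − (n+2)) / ((n+1)(n+2))) · C(n+2, (n+2−(h+2)(2k+1))/2), an identity of rational numbers (the binomial arguments are non-negative integers by the parity assumption). Equivalently, with n = 2m−2 and υ_{h,k} = (h+2)(2k+1)/2, the probability q_{2m−2}^{(h)} equals (4/4^m) Σ_{k≥0} ((2υ_{h,k}² − m)/((2m−1)m)) C(2m, m−υ_{h,k}) whenever h ≡ 2m (mod 2). -/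
/-- Number of unrestricted ±1 paths of length `n` ending at `b`. -/
def cb : ℕ → ℤ → ℕ
  | 0, b => if b = 0 then 1 else 0
  | n+1, b => cb n (b-1) + cb n (b+1)

lemma cb_succ (n : ℕ) (b : ℤ) : cb (n+1) b = cb n (b-1) + cb n (b+1) := rfl

lemma cb_eq_zero : ∀ (n : ℕ) (b : ℤ), (n : ℤ) < |b| → cb n b = 0 := by
  intro n
  induction n with
  | zero => intro b hb; simp [cb]; rintro rfl; simp at hb
  | succ n ih =>
    intro b hb
    have h1 : (n : ℤ) < |b - 1| := by
      rcases abs_cases b with ⟨h, h'⟩ | ⟨h, h'⟩ <;> rcases abs_cases (b-1) with ⟨g, g'⟩ | ⟨g, g'⟩ <;> push_cast at hb ⊢ <;> omega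
    have h2 : (n : ℤ) < |b + 1| := by
      rcases abs_cases b with ⟨h, h'⟩ | ⟨h, h'⟩ <;> rcases abs_cases (b+1) with ⟨g, g'⟩ | ⟨g, g'⟩ <;> push_cast at hb ⊢ <;> omega
    simp [cb, ih _ h1, ih _ h2]

lemma cb_neg : ∀ (n : ℕ) (b : ℤ), cb n (-b) = cb n b := by
  intro n
  induction n with
  | zero => intro b; simp [cb, neg_eq_zero]
  | succ n ih =>
    intro b
    rw [cb_succ, cb_succ, show -b - 1 = -(b+1) by ring, show -b + 1 = -(b-1) by ring,
      ih, ih, Nat.add_comm]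

lemma cb_val : ∀ (n t : ℕ), t ≤ n → cb n ((n : ℤ) - 2*t) = n.choose t := by
  intro n
  induction n with
  | zero => intro t ht; interval_cases t; simp [cb]
  | succ n ih =>
    intro t ht
    rw [cb_succ, show ((n+1:ℕ):ℤ) - 2*(t:ℕ) - 1 = (n:ℤ) - 2*t by push_cast; ring,
      show ((n+1:ℕ):ℤ) - 2*(t:ℕ) + 1 = (n:ℤ) - 2*(t:ℤ) + 2 by push_cast; ring]
    rcases Nat.eq_zero_or_pos t with rfl | htpos
    · rw [show ((n:ℤ) - 2*((0:ℕ):ℤ) + 2) = (n:ℤ)+2 by push_cast; ring]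
      have hz : cb n ((n:ℤ)+2) = 0 := cb_eq_zero n _ (by rw [abs_of_nonneg (by positivity)]; omega)
      rw [hz, ih 0 (Nat.zero_le _)]
      simp
    · obtain ⟨s, rfl⟩ : ∃ s, t = s + 1 := ⟨t - 1, by omega⟩
      have h2 : cb n ((n:ℤ) - 2*((s+1:ℕ):ℤ) + 2) = n.choose s := by
        rw [show ((n:ℤ) - 2*((s+1:ℕ):ℤ) + 2) = (n:ℤ) - 2*(s:ℕ) by push_cast; ring]
        exact ih s (by omega)
      have h1 : cb n ((n:ℤ) - 2*((s+1:ℕ):ℤ)) = n.choose (s+1) := by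
        rcases Nat.lt_or_ge n (s+1) with hn | hn
        · have : n = s := by omega
          subst this
          rw [cb_eq_zero n _ (by rw [abs_of_nonpos (by push_cast; omega)]; push_cast; omega),
            Nat.choose_eq_zero_of_lt (by omega)]
        · exact ih (s+1) hn
      rw [h1, h2, Nat.choose_succ_succ]
      exact Nat.add_comm _ _


lemma bin_id (t u : ℕ) :
    ((t+2*u+4).choose (u+2) : ℚ) - 2*((t+2*u+4).choose (u+1)) + ((t+2*u+4).choose u)
      = (((t:ℚ)+2)^2 - ((t:ℚ)+2*u+6)) / (((t:ℚ)+2*u+5)*((t:ℚ)+2*u+6))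
          * ((t+2*u+6).choose (u+2) : ℚ) := by
  rw [Nat.cast_choose ℚ (show u+2 ≤ t+2*u+4 by omega),
      Nat.cast_choose ℚ (show u+1 ≤ t+2*u+4 by omega),
      Nat.cast_choose ℚ (show u ≤ t+2*u+4 by omega),
      Nat.cast_choose ℚ (show u+2 ≤ t+2*u+6 by omega),
      show t+2*u+4-(u+2) = t+u+2 by omega, show t+2*u+4-(u+1) = t+u+3 by omega,
      show t+2*u+4-u = t+u+4 by omega, show t+2*u+6-(u+2) = t+u+4 by omega]
  have e1 : ((u+2).factorial : ℚ) = ((u:ℚ)+2)*((u:ℚ)+1)*u.factorial := by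
    push_cast [show u+2 = (u+1)+1 from rfl, Nat.factorial_succ]; ring
  have e2 : ((u+1).factorial : ℚ) = ((u:ℚ)+1)*u.factorial := by
    push_cast [Nat.factorial_succ]; ring
  have e3 : ((t+u+3).factorial : ℚ) = ((t:ℚ)+u+3)*(t+u+2).factorial := by
    push_cast [show t+u+3 = (t+u+2)+1 from rfl, Nat.factorial_succ]; ring
  have e4 : ((t+u+4).factorial : ℚ) = ((t:ℚ)+u+4)*((t:ℚ)+u+3)*(t+u+2).factorial := by
    push_cast [show t+u+4 = ((t+u+2)+1)+1 from rfl, Nat.factorial_succ]; ring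
  have e5 : ((t+2*u+6).factorial : ℚ)
      = ((t:ℚ)+2*u+6)*((t:ℚ)+2*u+5)*(t+2*u+4).factorial := by
    push_cast [show t+2*u+6 = ((t+2*u+4)+1)+1 from rfl, Nat.factorial_succ]; ring
  rw [e1, e2, e3, e4, e5]
  have h1 : (u.factorial : ℚ) ≠ 0 := by positivity
  have h2 : ((t+u+2).factorial : ℚ) ≠ 0 := by positivity
  have h3 : ((t+2*u+4).factorial : ℚ) ≠ 0 := by positivity
  have h4 : ((u:ℚ)+1) ≠ 0 := by positivity
  have h5 : ((u:ℚ)+2) ≠ 0 := by positivity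
  have h6 : ((t:ℚ)+u+3) ≠ 0 := by positivity
  have h7 : ((t:ℚ)+u+4) ≠ 0 := by positivity
  have h8 : ((t:ℚ)+2*u+5) ≠ 0 := by positivity
  have h9 : ((t:ℚ)+2*u+6) ≠ 0 := by positivity
  field_simp
  ring

lemma key (n r : ℕ) (h2 : 2 ≤ r) (hpar : r % 2 = n % 2) :
    ((cb n ((r:ℤ)-2) : ℚ) + (cb n ((r:ℤ)+2) : ℚ) - 2*(cb n (r:ℤ) : ℚ)) =
      if r ≤ n+2 then
        ((r:ℚ)^2 - ((n:ℚ)+2)) / (((n:ℚ)+1)*((n:ℚ)+2)) * ((n+2).choose ((n+2-r)/2) : ℚ)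
      else 0 := by
  by_cases hr : r ≤ n + 2
  · rw [if_pos hr]
    have hs : ∃ s, n + 2 = r + 2*s := ⟨(n+2-r)/2, by omega⟩
    obtain ⟨s, hn⟩ := hs
    rw [show (n+2-r)/2 = s by omega]
    match s, hn with
    | 0, hn =>
      have hr' : (r:ℤ) = (n:ℤ) + 2 := by push_cast; omega
      have c1 : cb n ((r:ℤ)-2) = n.choose 0 := by
        rw [show (r:ℤ)-2 = (n:ℤ) - 2*((0:ℕ):ℤ) by omega]
        exact_mod_cast cb_val n 0 (by omega)
      have c2 : cb n ((r:ℤ)) = 0 := cb_eq_zero n _ (by rw [abs_of_nonneg (by positivity)]; omega)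
      have c3 : cb n ((r:ℤ)+2) = 0 := cb_eq_zero n _ (by rw [abs_of_nonneg (by positivity)]; omega)
      rw [c1, c2, c3]
      have hrn : (r:ℚ) = (n:ℚ) + 2 := by push_cast; exact_mod_cast hr'
      have h1 : ((n:ℚ)+1) ≠ 0 := by positivity
      have h2' : ((n:ℚ)+2) ≠ 0 := by positivity
      rw [hrn]
      simp only [Nat.choose_zero_right, Nat.cast_zero, Nat.cast_one]
      field_simp
      ring
    | 1, hn =>
      have hrn : r = n := by omega
      subst hrn
      have c1 : cb r ((r:ℤ)-2) = r.choose 1 := by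
        rw [show (r:ℤ)-2 = (r:ℤ) - 2*((1:ℕ):ℤ) by push_cast; ring]
        exact cb_val r 1 (by omega)
      have c2 : cb r ((r:ℤ)) = r.choose 0 := by
        rw [show (r:ℤ) = (r:ℤ) - 2*((0:ℕ):ℤ) by push_cast; ring]
        exact cb_val r 0 (by omega)
      have c3 : cb r ((r:ℤ)+2) = 0 := cb_eq_zero r _ (by rw [abs_of_nonneg (by positivity)]; omega)
      rw [c1, c2, c3, Nat.choose_one_right, Nat.choose_zero_right]
      rw [show (r+2).choose 1 = r + 2 by simp]
      have h1 : ((r:ℚ)+1) ≠ 0 := by positivity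
      have h2' : ((r:ℚ)+2) ≠ 0 := by positivity
      have hr2 : (2:ℚ) ≤ (r:ℚ) := by exact_mod_cast h2
      push_cast
      field_simp
      ring
    | (u+2), hn =>
      obtain ⟨t, rfl⟩ : ∃ t, r = t + 2 := ⟨r - 2, by omega⟩
      have hnt : n = t + 2*u + 4 := by omega
      subst hnt
      have c1 : cb (t+2*u+4) (((t+2:ℕ):ℤ)-2) = (t+2*u+4).choose (u+2) := by
        rw [show ((t+2:ℕ):ℤ)-2 = ((t+2*u+4:ℕ):ℤ) - 2*((u+2:ℕ):ℤ) by push_cast; ring]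
        exact_mod_cast cb_val (t+2*u+4) (u+2) (by omega)
      have c2 : cb (t+2*u+4) (((t+2:ℕ):ℤ)) = (t+2*u+4).choose (u+1) := by
        rw [show ((t+2:ℕ):ℤ) = ((t+2*u+4:ℕ):ℤ) - 2*((u+1:ℕ):ℤ) by push_cast; ring]
        exact_mod_cast cb_val (t+2*u+4) (u+1) (by omega)
      have c3 : cb (t+2*u+4) (((t+2:ℕ):ℤ)+2) = (t+2*u+4).choose u := by
        rw [show ((t+2:ℕ):ℤ)+2 = ((t+2*u+4:ℕ):ℤ) - 2*((u:ℕ):ℤ) by push_cast; ring]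
        exact_mod_cast cb_val (t+2*u+4) u (by omega)
      rw [c1, c2, c3, show t+2*u+4+2 = t+2*u+6 by omega]
      have := bin_id t u
      push_cast at this ⊢
      ring_nf at this ⊢
      linarith [this]
  · rw [if_neg hr]
    have hr4 : n + 4 ≤ r := by omega
    have c1 : cb n ((r:ℤ)-2) = 0 := cb_eq_zero n _ (by rw [abs_of_nonneg (by push_cast; omega)]; push_cast; omega)
    have c2 : cb n ((r:ℤ)) = 0 := cb_eq_zero n _ (by rw [abs_of_nonneg (by positivity)]; push_cast; omega)
    have c3 : cb n ((r:ℤ)+2) = 0 := cb_eq_zero n _ (by rw [abs_of_nonneg (by positivity)]; push_cast; omega)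
    rw [c1, c2, c3]
    norm_num

/-- support of shifted cb is finite -/
lemma supp_fin (n : ℕ) (c d : ℤ) (hd : d ≠ 0) :
    (Function.support (fun j : ℤ => (cb n (c + j*d) : ℤ))).Finite := by
  apply Set.Finite.subset (Set.Finite.preimage
    (f := fun j : ℤ => c + j*d) (Set.injOn_of_injective (fun x y hxy => by
      have : x * d = y * d := by linarith [hxy]
      exact mul_right_cancel₀ hd this)) (Set.finite_Icc (-(n:ℤ)) n))
  intro j hj
  simp only [Function.mem_support, ne_eq, Nat.cast_eq_zero] at hj
  have : ¬ ((n:ℤ) < |c + j*d|) := fun hlt => hj (cb_eq_zero n _ hlt)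
  simp only [Set.mem_preimage, Set.mem_Icc]
  rw [not_lt, abs_le] at this
  exact this

/-- The reflection sum. `e := 2*(h+2)`. -/
noncomputable def gfun (h n : ℕ) (a : ℤ) : ℤ :=
  ∑ᶠ j : ℤ, ((cb n (a + j*(2*((h:ℤ)+2))) : ℤ) - (cb n (-2 - a + j*(2*((h:ℤ)+2))) : ℤ))

lemma e_ne (h : ℕ) : (2*((h:ℤ)+2)) ≠ 0 := by positivity

lemma gfun_rec (h n : ℕ) (a : ℤ) :
    gfun h (n+1) a = gfun h n (a-1) + gfun h n (a+1) := by
  unfold gfun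
  have hpt : ∀ j : ℤ,
      ((cb (n+1) (a + j*(2*((h:ℤ)+2))) : ℤ) - (cb (n+1) (-2 - a + j*(2*((h:ℤ)+2))) : ℤ))
      = ((cb n ((a-1) + j*(2*((h:ℤ)+2))) : ℤ) - (cb n (-2 - (a-1) + j*(2*((h:ℤ)+2))) : ℤ))
        + ((cb n ((a+1) + j*(2*((h:ℤ)+2))) : ℤ) - (cb n (-2 - (a+1) + j*(2*((h:ℤ)+2))) : ℤ)) := by
    intro j
    rw [cb_succ, cb_succ,
      show a + j*(2*((h:ℤ)+2)) - 1 = (a-1) + j*(2*((h:ℤ)+2)) by ring,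
      show a + j*(2*((h:ℤ)+2)) + 1 = (a+1) + j*(2*((h:ℤ)+2)) by ring,
      show -2 - a + j*(2*((h:ℤ)+2)) - 1 = -2 - (a+1) + j*(2*((h:ℤ)+2)) by ring,
      show -2 - a + j*(2*((h:ℤ)+2)) + 1 = -2 - (a-1) + j*(2*((h:ℤ)+2)) by ring]
    push_cast
    ring
  rw [finsum_congr hpt]
  have fin1 : ∀ (c : ℤ), (Function.support fun j : ℤ =>
      ((cb n (c + j*(2*((h:ℤ)+2))) : ℤ) - (cb n (-2 - c + j*(2*((h:ℤ)+2))) : ℤ))).Finite := by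
    intro c
    apply Set.Finite.subset ((supp_fin n c _ (e_ne h)).union (supp_fin n (-2-c) _ (e_ne h)))
    exact Function.support_sub _ _
  exact finsum_add_distrib (fin1 (a-1)) (fin1 (a+1))

lemma gfun_bot (h n : ℕ) : gfun h n (-1) = 0 := by
  unfold gfun
  have : ∀ j : ℤ, ((cb n ((-1:ℤ) + j*(2*((h:ℤ)+2))) : ℤ) - (cb n (-2 - (-1) + j*(2*((h:ℤ)+2))) : ℤ)) = 0 := by
    intro j
    rw [show -2 - (-1:ℤ) + j*(2*((h:ℤ)+2)) = -1 + j*(2*((h:ℤ)+2)) by ring]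
    ring
  rw [finsum_congr this, finsum_zero]

lemma gfun_top (h n : ℕ) : gfun h n ((h:ℤ)+1) = 0 := by
  unfold gfun
  rw [finsum_sub_distrib (supp_fin n _ _ (e_ne h)) (supp_fin n _ _ (e_ne h))]
  have : ∑ᶠ j : ℤ, (cb n (-2 - ((h:ℤ)+1) + j*(2*((h:ℤ)+2))) : ℤ)
      = ∑ᶠ j : ℤ, (cb n (((h:ℤ)+1) + j*(2*((h:ℤ)+2))) : ℤ) := by
    rw [← finsum_comp_equiv (Equiv.subRight (1:ℤ))
      (f := fun j => (cb n (((h:ℤ)+1) + j*(2*((h:ℤ)+2))) : ℤ))]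
    apply finsum_congr
    intro j
    congr 1
    simp only [Equiv.subRight_apply]
    ring
  rw [this, sub_self]

lemma gfun_zero (h : ℕ) (a : ℤ) (ha : 0 ≤ a) (hah : a ≤ h) :
    gfun h 0 a = if a = 0 then 1 else 0 := by
  unfold gfun
  have hval : ∀ j : ℤ, j ≠ 0 →
      ((cb 0 (a + j*(2*((h:ℤ)+2))) : ℤ) - (cb 0 (-2 - a + j*(2*((h:ℤ)+2))) : ℤ)) = 0 := by
    intro j hj
    have hz1 : cb 0 (a + j*(2*((h:ℤ)+2))) = 0 := by
      apply cb_eq_zero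
      rcases lt_or_gt_of_ne hj with hneg | hpos
      · have : j ≤ -1 := by omega
        have h1 : j*(2*((h:ℤ)+2)) ≤ (-1)*(2*((h:ℤ)+2)) :=
          mul_le_mul_of_nonneg_right this (by positivity)
        rw [abs_of_nonpos (by linarith), Nat.cast_zero]
        linarith
      · have : 1 ≤ j := hpos
        have h1 : (1:ℤ)*(2*((h:ℤ)+2)) ≤ j*(2*((h:ℤ)+2)) :=
          mul_le_mul_of_nonneg_right this (by positivity)
        rw [abs_of_nonneg (by linarith), Nat.cast_zero]
        linarith
    have hz2 : cb 0 (-2 - a + j*(2*((h:ℤ)+2))) = 0 := by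
      apply cb_eq_zero
      rcases lt_or_gt_of_ne hj with hneg | hpos
      · have : j ≤ -1 := by omega
        have h1 : j*(2*((h:ℤ)+2)) ≤ (-1)*(2*((h:ℤ)+2)) :=
          mul_le_mul_of_nonneg_right this (by positivity)
        rw [abs_of_nonpos (by linarith), Nat.cast_zero]
        linarith
      · have : 1 ≤ j := hpos
        have h1 : (1:ℤ)*(2*((h:ℤ)+2)) ≤ j*(2*((h:ℤ)+2)) :=
          mul_le_mul_of_nonneg_right this (by positivity)
        rw [abs_of_nonneg (by linarith), Nat.cast_zero]
        linarith
    rw [hz1, hz2]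
    ring
  rw [finsum_eq_single _ 0 hval]
  have hz2 : cb 0 (-2 - a + 0*(2*((h:ℤ)+2))) = 0 := by
    apply cb_eq_zero; rw [abs_of_nonpos (by linarith), Nat.cast_zero]; linarith
  rw [hz2]
  simp only [zero_mul, add_zero, Nat.cast_zero, sub_zero]
  by_cases h0 : a = 0 <;> simp [cb, h0]

noncomputable def Pc (h n : ℕ) (a : ℤ) : ℕ :=
  Nat.card {ε : Fin n → Bool //
    (∀ k ≤ n, 0 ≤ walkSum n ε k ∧ walkSum n ε k ≤ (h : ℤ)) ∧ walkSum n ε n = a}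

lemma card_eq {α : Type} [Fintype α] (p : α → Prop) [DecidablePred p] :
    Nat.card {x // p x} = ∑ x : α, if p x then 1 else 0 := by
  rw [Nat.card_eq_fintype_card, Fintype.card_subtype, Finset.card_filter]

lemma ws_prefix (n : ℕ) (ε : Fin (n+1) → Bool) (k : ℕ) (hk : k ≤ n) :
    walkSum (n+1) ε k = walkSum n (fun i => ε i.castSucc) k := by
  unfold walkSum
  rw [Fin.sum_univ_castSucc]
  simp [Fin.coe_castSucc, Fin.val_last, Nat.not_lt.mpr hk]

lemma ws_last (n : ℕ) (ε : Fin (n+1) → Bool) :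
    walkSum (n+1) ε (n+1)
      = walkSum n (fun i => ε i.castSucc) n + (if ε (Fin.last n) then 1 else -1) := by
  unfold walkSum
  rw [Fin.sum_univ_castSucc]
  simp only [Fin.coe_castSucc, Fin.val_last]
  congr 1
  · apply Finset.sum_congr rfl
    intro i _
    rw [if_pos (by omega), if_pos i.is_lt]
  · rw [if_pos (by omega)]

lemma cond_iff (h n : ℕ) (a : ℤ) (ha : 0 ≤ a) (hah : a ≤ (h:ℤ)) (ε : Fin (n+1) → Bool) :
    ((∀ k ≤ n+1, 0 ≤ walkSum (n+1) ε k ∧ walkSum (n+1) ε k ≤ (h:ℤ))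
        ∧ walkSum (n+1) ε (n+1) = a)
      ↔ ((∀ k ≤ n, 0 ≤ walkSum n (fun i => ε i.castSucc) k
            ∧ walkSum n (fun i => ε i.castSucc) k ≤ (h:ℤ))
          ∧ walkSum n (fun i => ε i.castSucc) n
              = a - (if ε (Fin.last n) then 1 else -1)) := by
  constructor
  · rintro ⟨hb, he⟩
    refine ⟨fun k hk => by rw [← ws_prefix n ε k hk]; exact hb k (by omega), ?_⟩
    have := ws_last n ε
    omega
  · rintro ⟨hb, he⟩
    constructor
    · intro k hk
      rcases Nat.lt_or_ge k (n+1) with hk' | hk'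
      · rw [ws_prefix n ε k (by omega)]
        exact hb k (by omega)
      · have hk2 : k = n + 1 := by omega
        subst hk2
        rw [ws_last n ε, he]
        constructor <;> [skip; skip] <;> split_ifs <;> omega
    · rw [ws_last n ε, he]; ring

lemma Pc_rec (h n : ℕ) (a : ℤ) (ha : 0 ≤ a) (hah : a ≤ (h:ℤ)) :
    Pc h (n+1) a = Pc h n (a-1) + Pc h n (a+1) := by
  classical
  unfold Pc
  rw [card_eq, card_eq, card_eq]
  rw [← Equiv.sum_comp (Fin.insertNthEquiv (fun _ => Bool) (Fin.last n))
    (fun ε : Fin (n+1) → Bool => if ((∀ k ≤ n+1, 0 ≤ walkSum (n+1) ε k ∧ walkSum (n+1) ε k ≤ (h:ℤ))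
        ∧ walkSum (n+1) ε (n+1) = a) then (1:ℕ) else 0)]
  rw [Fintype.sum_prod_type, Fintype.sum_bool]
  have hlast : ∀ (b : Bool) (ε' : Fin n → Bool),
      (Fin.insertNthEquiv (fun _ => Bool) (Fin.last n)) (b, ε') (Fin.last n) = b := by
    intro b ε'; simp [Fin.insertNthEquiv]
  have hcast : ∀ (b : Bool) (ε' : Fin n → Bool),
      (fun i : Fin n => (Fin.insertNthEquiv (fun _ => Bool) (Fin.last n)) (b, ε') i.castSucc) = ε' := by
    intro b ε'
    funext i
    have : (Fin.last n).succAbove i = i.castSucc := by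
      rw [Fin.succAbove_last]
    simp only [Fin.insertNthEquiv, Equiv.coe_fn_mk, ← this]
    rw [Fin.insertNth_apply_succAbove]
  have key : ∀ (b : Bool) (c : ℤ), a - (if b then (1:ℤ) else -1) = c →
      (∑ ε' : Fin n → Bool,
        if ((∀ k ≤ n+1, 0 ≤ walkSum (n+1) ((Fin.insertNthEquiv (fun _ => Bool) (Fin.last n)) (b, ε')) k
              ∧ walkSum (n+1) ((Fin.insertNthEquiv (fun _ => Bool) (Fin.last n)) (b, ε')) k ≤ (h:ℤ))
            ∧ walkSum (n+1) ((Fin.insertNthEquiv (fun _ => Bool) (Fin.last n)) (b, ε')) (n+1) = a)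
          then (1:ℕ) else 0)
      = ∑ ε' : Fin n → Bool,
          if ((∀ k ≤ n, 0 ≤ walkSum n ε' k ∧ walkSum n ε' k ≤ (h:ℤ)) ∧ walkSum n ε' n = c)
          then (1:ℕ) else 0 := by
    intro b c hc
    apply Finset.sum_congr rfl
    intro ε' _
    apply if_congr _ rfl rfl
    rw [cond_iff h n a ha hah, hcast b ε', hlast b ε', hc]
  rw [key true (a-1) (by simp), key false (a+1) (by simp)]

lemma Pc_zero (h : ℕ) (a : ℤ) : Pc h 0 a = if a = 0 then 1 else 0 := by
  classical
  unfold Pc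
  rw [card_eq]
  have hws : ∀ (ε : Fin 0 → Bool) (k : ℕ), walkSum 0 ε k = 0 := by
    intro ε k; unfold walkSum; simp
  simp only [hws]
  have h0h : (0:ℤ) ≤ (h:ℤ) := by positivity
  by_cases h0 : a = 0
  · subst h0
    simp [h0h]
  · simp [h0h, h0, eq_comm, Ne.symm h0]

lemma Pc_out (h n : ℕ) (a : ℤ) (hout : a < 0 ∨ (h:ℤ) < a) : Pc h n a = 0 := by
  unfold Pc
  have : IsEmpty {ε : Fin n → Bool //
      (∀ k ≤ n, 0 ≤ walkSum n ε k ∧ walkSum n ε k ≤ (h : ℤ)) ∧ walkSum n ε n = a} := by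
    constructor
    rintro ⟨ε, ⟨hb, he⟩⟩
    have := hb n le_rfl
    omega
  exact Nat.card_of_isEmpty

lemma gfun_top_sum (h n : ℕ) :
    gfun h n (h:ℤ) = ∑ k ∈ Finset.range (n+2),
      (((cb n ((h:ℤ) + (k:ℤ)*(2*((h:ℤ)+2))) : ℤ)
          - (cb n (((h:ℤ)+2) + (k:ℤ)*(2*((h:ℤ)+2))) : ℤ))
        + ((cb n ((h:ℤ) + (-1-(k:ℤ))*(2*((h:ℤ)+2))) : ℤ)
          - (cb n (((h:ℤ)+2) + (-1-(k:ℤ))*(2*((h:ℤ)+2))) : ℤ))) := by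
  unfold gfun
  rw [finsum_sub_distrib (supp_fin n _ _ (e_ne h)) (supp_fin n _ _ (e_ne h))]
  have step : (∑ᶠ j:ℤ, (cb n (((h:ℤ)+2) + j*(2*((h:ℤ)+2))):ℤ))
      = ∑ᶠ j:ℤ, (cb n (-2-(h:ℤ) + j*(2*((h:ℤ)+2))):ℤ) := by
    rw [← finsum_comp_equiv (Equiv.addRight (1:ℤ))
      (f := fun j : ℤ => (cb n (-2-(h:ℤ)+j*(2*((h:ℤ)+2))):ℤ))]
    exact finsum_congr fun j => by
      simp only [Equiv.coe_addRight]
      congr 1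
      ring
  rw [← step, ← finsum_sub_distrib (supp_fin n _ _ (e_ne h)) (supp_fin n _ _ (e_ne h))]
  rw [finsum_eq_finset_sum_of_support_subset _
    (s := Finset.Icc (-(n:ℤ)-2) ((n:ℤ)+1)) ?hsupp]
  case hsupp =>
    intro j hj
    simp only [Function.mem_support, ne_eq] at hj
    simp only [Finset.coe_Icc, Set.mem_Icc]
    by_contra hout
    push_neg at hout
    apply hj
    have he4 : (4:ℤ) ≤ 2*((h:ℤ)+2) := by omega
    rcases lt_or_ge j 0 with hneg | hpos
    · have hjle : j ≤ -(n:ℤ)-3 := by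
        rcases le_or_gt (-(n:ℤ)-2) j with hc | hc
        · exact absurd ((hout hc)) (by omega)
        · omega
      have h1 : j*(2*((h:ℤ)+2)) ≤ (-(n:ℤ)-3)*(2*((h:ℤ)+2)) :=
        mul_le_mul_of_nonneg_right hjle (by positivity)
      have hz1 : cb n ((h:ℤ) + j*(2*((h:ℤ)+2))) = 0 := by
        apply cb_eq_zero
        rw [abs_of_nonpos (by nlinarith)]
        nlinarith
      have hz2 : cb n (((h:ℤ)+2) + j*(2*((h:ℤ)+2))) = 0 := by
        apply cb_eq_zero
        rw [abs_of_nonpos (by nlinarith)]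
        nlinarith
      rw [hz1, hz2, sub_self]
    · have hjge : (n:ℤ)+2 ≤ j := by
        rcases le_or_gt j ((n:ℤ)+1) with hc | hc
        · exact absurd (hout (by omega)) (by omega)
        · omega
      have h1 : ((n:ℤ)+2)*(2*((h:ℤ)+2)) ≤ j*(2*((h:ℤ)+2)) :=
        mul_le_mul_of_nonneg_right hjge (by positivity)
      have hz1 : cb n ((h:ℤ) + j*(2*((h:ℤ)+2))) = 0 := by
        apply cb_eq_zero
        rw [abs_of_nonneg (by nlinarith)]
        nlinarith
      have hz2 : cb n (((h:ℤ)+2) + j*(2*((h:ℤ)+2))) = 0 := by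
        apply cb_eq_zero
        rw [abs_of_nonneg (by nlinarith)]
        nlinarith
      rw [hz1, hz2, sub_self]
  · have hsplit : Finset.Icc (-(n:ℤ)-2) ((n:ℤ)+1)
        = Finset.Icc (-(n:ℤ)-2) (-1) ∪ Finset.Icc 0 ((n:ℤ)+1) := by
      ext x
      simp only [Finset.mem_Icc, Finset.mem_union]
      omega
    have hdisj : Disjoint (Finset.Icc (-(n:ℤ)-2) (-1)) (Finset.Icc (0:ℤ) ((n:ℤ)+1)) := by
      rw [Finset.disjoint_left]
      intro x hx hx'
      simp only [Finset.mem_Icc] at hx hx'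
      omega
    rw [hsplit, Finset.sum_union hdisj, Finset.sum_add_distrib]
    conv_lhs => rw [add_comm]
    congr 1
    · apply Finset.sum_nbij' (i := fun j : ℤ => j.toNat) (j := fun k : ℕ => (k:ℤ))
      · intro j hj
        simp only [Finset.mem_Icc] at hj
        simp only [Finset.mem_range]
        omega
      · intro k hk
        simp only [Finset.mem_range] at hk
        simp only [Finset.mem_Icc]
        omega
      · intro j hj
        simp only [Finset.mem_Icc] at hj
        omega
      · intro k hk
        simp only [Finset.mem_range] at hk
        omega
      · intro j hj
        simp only [Finset.mem_Icc] at hj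
        have hc : (j.toNat : ℤ) = j := by omega
        rw [hc]
    · apply Finset.sum_nbij' (i := fun j : ℤ => (-1-j).toNat) (j := fun k : ℕ => -1-(k:ℤ))
      · intro j hj
        simp only [Finset.mem_Icc] at hj
        simp only [Finset.mem_range]
        omega
      · intro k hk
        simp only [Finset.mem_range] at hk
        simp only [Finset.mem_Icc]
        omega
      · intro j hj
        simp only [Finset.mem_Icc] at hj
        omega
      · intro k hk
        simp only [Finset.mem_range] at hk
        omega
      · intro j hj
        simp only [Finset.mem_Icc] at hj
        have hc : ((-1-j).toNat : ℤ) = -1-j := by omega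
        rw [hc, show (h:ℤ) + (-1 - (-1 - j))*(2*((h:ℤ)+2)) = (h:ℤ) + j*(2*((h:ℤ)+2)) by ring,
          show (h:ℤ)+2 + (-1 - (-1 - j))*(2*((h:ℤ)+2)) = (h:ℤ)+2 + j*(2*((h:ℤ)+2)) by ring]


lemma main_eq (h : ℕ) : ∀ (n : ℕ) (a : ℤ), 0 ≤ a → a ≤ (h:ℤ) → (Pc h n a : ℤ) = gfun h n a := by
  intro n
  induction n with
  | zero =>
    intro a ha hah
    rw [Pc_zero, gfun_zero h a ha hah]
    split_ifs <;> simp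
  | succ n ih =>
    intro a ha hah
    rw [Pc_rec h n a ha hah, gfun_rec]
    push_cast
    congr 1
    · rcases eq_or_lt_of_le ha with h0 | h0
      · rw [← h0, show (0:ℤ) - 1 = -1 by ring, gfun_bot,
          Pc_out h n (-1) (Or.inl (by norm_num))]
        norm_num
      · exact ih (a-1) (by omega) (by omega)
    · rcases eq_or_lt_of_le hah with hh | hh
      · rw [hh, gfun_top, Pc_out h n ((h:ℤ)+1) (Or.inr (by omega))]
        norm_num
      · exact ih (a+1) (by omega) (by omega)

/-- Explicit formula for `W(n,h)`: for `h ≡ n (mod 2)`,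
`W(n,h) = Σ_{k≥0, (h+2)(2k+1) ≤ n+2} (((h+2)²(2k+1)² − (n+2))/((n+1)(n+2)))
· C(n+2, (n+2−(h+2)(2k+1))/2)`. -/
theorem W_explicit (n h : ℕ) (hpar : h % 2 = n % 2) :
    (W n h : ℚ) =
      ∑ k ∈ Finset.range (n + 2),
        (if (h + 2) * (2 * k + 1) ≤ n + 2 then
          ((((h : ℚ) + 2) ^ 2 * (2 * (k : ℚ) + 1) ^ 2 - ((n : ℚ) + 2)) /
              (((n : ℚ) + 1) * ((n : ℚ) + 2))) *
            ((n + 2).choose ((n + 2 - (h + 2) * (2 * k + 1)) / 2) : ℚ)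
        else 0) := by
  have h1 : (W n h : ℤ) = gfun h n (h:ℤ) := by
    have hW : W n h = Pc h n (h:ℤ) := rfl
    rw [hW]
    exact main_eq h n (h:ℤ) (by positivity) le_rfl
  have hQ : (W n h : ℚ) = ((gfun h n (h:ℤ) : ℤ) : ℚ) := by
    rw [← h1]
    push_cast
    rfl
  rw [hQ, gfun_top_sum h n]
  push_cast
  apply Finset.sum_congr rfl
  intro k _
  have hr2 : 2 ≤ (h+2)*(2*k+1) := by
    have : h+2 ≤ (h+2)*(2*k+1) := Nat.le_mul_of_pos_right _ (by omega)
    omega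
  have hpar2 : ((h+2)*(2*k+1)) % 2 = n % 2 := by
    rw [Nat.mul_mod]
    have e1 : (2*k+1) % 2 = 1 := by omega
    have e2 : (h+2) % 2 = h % 2 := by omega
    rw [e1, e2]
    omega
  have hkey := key n ((h+2)*(2*k+1)) hr2 hpar2
  rw [show (h:ℤ) + (k:ℤ)*(2*((h:ℤ)+2)) = (((h+2)*(2*k+1) : ℕ) : ℤ) - 2 by push_cast; ring,
    show (h:ℤ)+2 + (k:ℤ)*(2*((h:ℤ)+2)) = (((h+2)*(2*k+1) : ℕ) : ℤ) by push_cast; ring,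
    show (h:ℤ) + (-1-(k:ℤ))*(2*((h:ℤ)+2)) = -((((h+2)*(2*k+1) : ℕ) : ℤ) + 2) by push_cast; ring,
    show (h:ℤ)+2 + (-1-(k:ℤ))*(2*((h:ℤ)+2)) = -(((h+2)*(2*k+1) : ℕ) : ℤ) by push_cast; ring,
    cb_neg, cb_neg]
  rw [show (((h:ℚ)+2)^2 * (2*(k:ℚ)+1)^2) = ((((h+2)*(2*k+1) : ℕ)):ℚ)^2 by push_cast; ring]
  push_cast at hkey ⊢
  split_ifs at hkey ⊢ with hc
  · linarith [hkey]
  · linarith [hkey]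
end

section
/- There exist constants C > 0 and N₀ such that for every integer N ≥ N₀ and every integer a with a ≡ N (mod 2) and |a|/2 ≤ (N/2)^{2/3}, the central binomial coefficient satisfies |C(N, (N−a)/2) − (2^N / √(π N / 2)) · exp(−a²/(2N))| ≤ C · (2^N / √(N/2)) · exp(−a²/(2N)) · (1 + |a|/2)/(N/2). (In half-integer notation n = N/2, α = a/2: C(2n, n−α) = (4^n/√(nπ)) exp(−α²/n) (1 + O((1+|α|)/n)) uniformly for |α| ≤ n^{2/3}.) -/
/-!
Write `k = (N - a)/2 = (N/2)(1 - x)` and `N - k = (N/2)(1 + x)` with `x = a/N`, and take logarithms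
of `N! / (k! (N - k)!)` using Stirling's formula with Robbins' error bound
`0 ≤ log (m! / (√(2πm) (m/e)^m)) ≤ 1/(12m)`. The exact logarithm differs from that of the Gaussian
approximation by three terms: the entropy defect `(N/2)((1-x)log(1-x) + (1+x)log(1+x) - x²) = O(N x⁴)`,
the term `log(1 - x²)/2 = O(x²)`, and the Stirling corrections `O(1/N)`. In the window
`|a|/2 ≤ (N/2)^{2/3}` we have `N |x|³ ≤ 2`, so `N x⁴ ≤ 2|x|`; the total log-error is therefore
`O(|x| + 1/N) = O((2 + |a|)/N)`, and `|eᴱ - 1| ≤ 2|E|` turns this into the relative error bound.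
-/

open Real

/-- Binomial coefficient `C(N, b)` with an integer lower argument, equal to `0` when `b < 0`
(and automatically `0` when `b > N`). -/
def binomZ (N : ℕ) (b : ℤ) : ℕ := if 0 ≤ b then N.choose b.toNat else 0

open Filter Topology Finset
open scoped Nat

namespace Stirling

/-- Robbins' bound makes `log (stirlingSeq m) - 1/(12m)` increase, towards `log √π`. -/
theorem log_stirlingSeq_le {n : ℕ} (hn : n ≠ 0) :
    log (stirlingSeq n) ≤ log √π + 1 / (12 * n) := by
  set f : ℕ → ℝ := fun k => log (stirlingSeq (n + k)) - 1 / (12 * (n + k : ℕ)) with hf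
  have hmono : Monotone f := by
    refine monotone_nat_of_le_succ fun k => ?_
    have hpos : (0 : ℝ) < (n + k : ℕ) := by positivity
    have hrobbins := log_stirlingSeq_sdiff_le (n + k)
    simp only [hf, ← add_assoc]
    push_cast at hrobbins ⊢
    have htelescope : 1 / (12 * ((n : ℝ) + k) * ((n : ℝ) + k + 1)) =
        1 / (12 * ((n : ℝ) + k)) - 1 / (12 * ((n : ℝ) + k + 1)) := by
      field_simp
      ring
    linarith
  have hshift : Tendsto (fun k => n + k) atTop atTop :=
    tendsto_add_atTop_nat n |>.congr fun k => add_comm k n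
  have hlim : Tendsto f atTop (𝓝 (log √π - 0)) := by
    refine ((continuousAt_log (sqrt_pos.2 pi_pos).ne').tendsto.comp
      (tendsto_stirlingSeq_sqrt_pi.comp hshift)).sub ?_
    refine ((tendsto_const_div_atTop_nhds_zero_nat (1 / 12 : ℝ)).comp hshift).congr fun k => ?_
    simp only [Function.comp, div_div]
  simpa [hf] using hmono.ge_of_tendsto hlim 0

theorem log_sqrt_pi_le_log_stirlingSeq {n : ℕ} (hn : n ≠ 0) : log √π ≤ log (stirlingSeq n) :=
  log_le_log (sqrt_pos.2 pi_pos) (sqrt_pi_le_stirlingSeq hn)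

theorem log_factorial_eq {n : ℕ} (hn : n ≠ 0) :
    log n ! = log (stirlingSeq n) + n * (log n - 1) + log (2 * n) / 2 := by
  rw [log_stirlingSeq_formula, log_div (by positivity) (exp_pos 1).ne', log_exp]
  ring

end Stirling

open Stirling

theorem abs_log_one_sub_add_le {x : ℝ} (hx : |x| ≤ 1 / 2) :
    |log (1 - x) + (x + x ^ 2 / 2 + x ^ 3 / 3)| ≤ 2 * x ^ 4 := by
  have h := abs_log_sub_add_sum_range_le (hx.trans_lt (by norm_num)) 3
  simp only [sum_range_succ, sum_range_zero] at h
  norm_num at h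
  calc _ = |x + x ^ 2 / 2 + x ^ 3 / 3 + log (1 - x)| := by ring_nf
    _ ≤ |x| ^ 4 / (1 - |x|) := h
    _ ≤ 2 * x ^ 4 := by
      rw [div_le_iff₀ (by linarith), Even.pow_abs (by decide)]
      nlinarith [pow_nonneg (sq_nonneg x) 2, abs_nonneg x]

theorem abs_entropy_sub_sq_le {x : ℝ} (hx : |x| ≤ 1 / 2) :
    |(1 - x) * log (1 - x) + (1 + x) * log (1 + x) - x ^ 2| ≤ 5 * x ^ 4 := by
  have hA := abs_log_one_sub_add_le hx
  have hB := abs_log_one_sub_add_le (x := -x) (by rwa [abs_neg])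
  rw [sub_neg_eq_add] at hB
  set A := log (1 - x) + (x + x ^ 2 / 2 + x ^ 3 / 3)
  set B := log (1 + x) + (-x + (-x) ^ 2 / 2 + (-x) ^ 3 / 3)
  -- the cubic terms cancel between the two expansions
  have hexpand : (1 - x) * log (1 - x) + (1 + x) * log (1 + x) - x ^ 2 =
      (1 - x) * A + (1 + x) * B + 2 / 3 * x ^ 4 := by ring
  have h1 : 0 ≤ 1 - x := by linarith [(abs_le.1 hx).2]
  have h2 : 0 ≤ 1 + x := by linarith [(abs_le.1 hx).1]
  rw [hexpand]
  calc _ ≤ |(1 - x) * A| + |(1 + x) * B| + |2 / 3 * x ^ 4| := abs_add_three _ _ _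
    _ ≤ (1 - x) * (2 * x ^ 4) + (1 + x) * (2 * (-x) ^ 4) + 2 / 3 * x ^ 4 := by
      rw [abs_mul, abs_mul, abs_of_nonneg h1, abs_of_nonneg h2,
        abs_of_nonneg (by positivity : (0 : ℝ) ≤ 2 / 3 * x ^ 4)]
      gcongr
    _ ≤ 5 * x ^ 4 := by nlinarith [pow_nonneg (sq_nonneg x) 2]

theorem abs_log_one_sub_sq_le {x : ℝ} (hx : |x| ≤ 1 / 2) : |log (1 - x ^ 2)| ≤ 2 * x ^ 2 := by
  have hx2 : x ^ 2 ≤ 1 / 4 := by nlinarith [abs_nonneg x, sq_abs x]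
  have h := abs_log_sub_add_sum_range_le (x := x ^ 2) (by rw [abs_sq]; linarith) 0
  simp only [sum_range_zero, zero_add, pow_one, abs_sq] at h
  calc _ ≤ x ^ 2 / (1 - x ^ 2) := h
    _ ≤ 2 * x ^ 2 := by
      rw [div_le_iff₀ (by linarith)]
      nlinarith [sq_nonneg x]

theorem le_of_cast_eq_half_mul_one_sub {N k : ℕ} {x : ℝ} (hx : -1 ≤ x)
    (hk : (k : ℝ) = N / 2 * (1 - x)) : k ≤ N := by
  have : (k : ℝ) ≤ N := by rw [hk]; nlinarith [(N.cast_nonneg : (0 : ℝ) ≤ N)]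
  exact_mod_cast this

theorem cast_sub_eq_half_mul_one_add {N k : ℕ} {x : ℝ} (hx : -1 ≤ x)
    (hk : (k : ℝ) = N / 2 * (1 - x)) : ((N - k : ℕ) : ℝ) = N / 2 * (1 + x) := by
  push_cast [le_of_cast_eq_half_mul_one_sub hx hk]
  rw [hk]
  ring

noncomputable def gaussApprox (N : ℕ) (a : ℝ) : ℝ := 2 ^ N / √(π * N / 2) * exp (-a ^ 2 / (2 * N))

theorem gaussApprox_pos {N : ℕ} (hN : N ≠ 0) (a : ℝ) : 0 < gaussApprox N a := by
  unfold gaussApprox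
  positivity

theorem gaussApprox_le {N : ℕ} (hN : N ≠ 0) (a : ℝ) :
    gaussApprox N a ≤ 2 ^ N / √(N / 2) * exp (-a ^ 2 / (2 * N)) := by
  unfold gaussApprox
  gcongr
  nlinarith [pi_gt_three, (by positivity : (0 : ℝ) < N)]

theorem log_gaussApprox {N : ℕ} (hN : N ≠ 0) (a : ℝ) :
    log (gaussApprox N a) = N * log 2 - (log π + log N - log 2) / 2 - a ^ 2 / (2 * N) := by
  have hN' : (0 : ℝ) < N := by positivity
  rw [gaussApprox, log_mul (by positivity) (exp_pos _).ne', log_exp, log_div (by positivity)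
    (by positivity), log_pow, log_sqrt (by positivity), log_div (by positivity) two_ne_zero,
    log_mul pi_ne_zero hN'.ne']
  ring

theorem log_choose_eq {N k : ℕ} {x : ℝ} (hN : N ≠ 0) (hx : |x| < 1)
    (hk : (k : ℝ) = N / 2 * (1 - x)) :
    log (N.choose k) = log (gaussApprox N (N * x))
      - N / 2 * ((1 - x) * log (1 - x) + (1 + x) * log (1 + x) - x ^ 2) - log (1 - x ^ 2) / 2
      + ((log (stirlingSeq N) - log √π) - (log (stirlingSeq k) - log √π)
        - (log (stirlingSeq (N - k)) - log √π)) := by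
  obtain ⟨hx₁, hx₂⟩ := abs_lt.1 hx
  have hN' : (0 : ℝ) < N := by positivity
  have hkN := le_of_cast_eq_half_mul_one_sub hx₁.le hk
  have hNk := cast_sub_eq_half_mul_one_add hx₁.le hk
  have hkpos : (0 : ℝ) < k := by rw [hk]; nlinarith
  have hNkpos : (0 : ℝ) < (N - k : ℕ) := by rw [hNk]; nlinarith
  have hlog : ∀ y : ℝ, 0 < y → log (N / 2 * y) = log N - log 2 + log y := fun y hy => by
    rw [log_mul (by positivity) hy.ne', log_div hN'.ne' two_ne_zero]
  have hlog₂ : ∀ y : ℝ, 0 < y → log (2 * (N / 2 * y)) = log N + log y := fun y hy => by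
    rw [← mul_assoc, mul_div_cancel₀ _ two_ne_zero, log_mul hN'.ne' hy.ne']
  rw [Nat.cast_choose ℝ hkN, log_div (by positivity) (by positivity), log_mul (by positivity)
    (by positivity), log_factorial_eq hN, log_factorial_eq (by exact_mod_cast hkpos.ne'),
    log_factorial_eq (by exact_mod_cast hNkpos.ne'), hNk, hk, log_gaussApprox hN,
    hlog _ (by linarith), hlog _ (by linarith), hlog₂ _ (by linarith), hlog₂ _ (by linarith),
    log_mul two_ne_zero hN'.ne', log_sqrt pi_pos.le,
    show 1 - x ^ 2 = (1 - x) * (1 + x) by ring, log_mul (by linarith) (by linarith)]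
  field_simp
  ring

theorem abs_log_choose_sub_log_gaussApprox_le {N k : ℕ} {x : ℝ} (hN : N ≠ 0) (hx : |x| ≤ 1 / 2)
    (hk : (k : ℝ) = N / 2 * (1 - x)) :
    |log (N.choose k) - log (gaussApprox N (N * x))| ≤ N / 2 * (5 * x ^ 4) + x ^ 2 + 1 / N := by
  obtain ⟨hx₁, hx₂⟩ := abs_le.1 hx
  have hN' : (0 : ℝ) < N := by positivity
  have hNk := cast_sub_eq_half_mul_one_add (by linarith) hk
  have hstirling : ∀ m : ℕ, (N : ℝ) / 4 ≤ m →
      0 ≤ log (stirlingSeq m) - log √π ∧ log (stirlingSeq m) - log √π ≤ 1 / (3 * N) := by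
    intro m hm
    have hm' : m ≠ 0 := by rintro rfl; norm_num at hm; linarith
    refine ⟨sub_nonneg.2 (log_sqrt_pi_le_log_stirlingSeq hm'), ?_⟩
    have := log_stirlingSeq_le hm'
    have : 1 / (12 * (m : ℝ)) ≤ 1 / (3 * N) := one_div_le_one_div_of_le (by positivity) (by linarith)
    linarith
  obtain ⟨hεN, hεN'⟩ := hstirling N (by linarith)
  obtain ⟨hεk, hεk'⟩ := hstirling k (by rw [hk]; nlinarith)
  obtain ⟨hεNk, hεNk'⟩ := hstirling (N - k) (by rw [hNk]; nlinarith)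
  have hentropy : |N / 2 * ((1 - x) * log (1 - x) + (1 + x) * log (1 + x) - x ^ 2)| ≤
      N / 2 * (5 * x ^ 4) := by
    rw [abs_mul, abs_of_pos (by positivity : (0 : ℝ) < N / 2)]
    exact mul_le_mul_of_nonneg_left (abs_entropy_sub_sq_le hx) (by positivity)
  have hlog := abs_log_one_sub_sq_le hx
  have h3N : 1 / (3 * (N : ℝ)) = 1 / N / 3 := by field_simp
  rw [log_choose_eq hN (by linarith [abs_nonneg x]) hk, abs_le]
  rw [abs_le] at hentropy hlog
  constructor <;> linarith [hentropy.1, hentropy.2, hlog.1, hlog.2]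

theorem abs_choose_sub_gaussApprox_le {N k : ℕ} {x : ℝ} (hN : 2000 ≤ N)
    (hk : (k : ℝ) = N / 2 * (1 - x)) (hx : N * |x| ^ 3 ≤ 2) :
    |(N.choose k : ℝ) - gaussApprox N (N * x)| ≤ 12 * gaussApprox N (N * x) * (|x| + 2 / N) := by
  have hN' : (2000 : ℝ) ≤ N := by exact_mod_cast hN
  have hx10 : |x| ≤ 1 / 10 := by
    refine (pow_le_pow_iff_left₀ (abs_nonneg x) (by norm_num) three_ne_zero).1 ?_
    have := (mul_le_mul_of_nonneg_right hN' (by positivity : 0 ≤ |x| ^ 3)).trans hx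
    norm_num
    linarith
  set E := log (N.choose k) - log (gaussApprox N (N * x))
  have hE : |E| ≤ 51 / 10 * |x| + 1 / N := by
    refine (abs_log_choose_sub_log_gaussApprox_le (by positivity) (by linarith) hk).trans ?_
    have hx4 : (N : ℝ) / 2 * (5 * x ^ 4) = 5 / 2 * |x| * (N * |x| ^ 3) := by
      rw [← Even.pow_abs (by decide) x]
      ring
    rw [hx4, ← sq_abs]
    nlinarith [abs_nonneg x]
  have hE1 : |E| ≤ 1 := by
    have : 1 / (N : ℝ) ≤ 1 / 2000 := one_div_le_one_div_of_le (by norm_num) hN'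
    linarith
  have hg := gaussApprox_pos (by positivity : N ≠ 0) (N * x)
  have hkN := le_of_cast_eq_half_mul_one_sub (by linarith [abs_le.1 hx10]) hk
  have hchoose : (N.choose k : ℝ) = gaussApprox N (N * x) * exp E := by
    rw [exp_sub, exp_log (by exact_mod_cast Nat.choose_pos hkN), exp_log hg]
    field_simp
  calc |(N.choose k : ℝ) - gaussApprox N (N * x)| = gaussApprox N (N * x) * |exp E - 1| := by
        rw [hchoose, ← abs_of_pos hg, ← abs_mul, abs_of_pos hg]
        ring_nf
    _ ≤ gaussApprox N (N * x) * (2 * (51 / 10 * |x| + 1 / N)) := by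
        gcongr
        exact (abs_exp_sub_one_le hE1).trans (by gcongr)
    _ ≤ 12 * gaussApprox N (N * x) * (|x| + 2 / N) := by
        rw [mul_comm 12, mul_assoc, div_eq_mul_one_div 2]
        refine mul_le_mul_of_nonneg_left ?_ hg.le
        linarith [abs_nonneg x, (by positivity : 0 ≤ 1 / (N : ℝ))]

theorem exists_binomZ_eq_choose {N : ℕ} {a : ℤ} (hpar : a % 2 = (N : ℤ) % 2) (haN : a ≤ N) :
    ∃ k : ℕ, 2 * (k : ℤ) = N - a ∧ binomZ N (((N : ℤ) - a) / 2) = N.choose k := by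
  obtain ⟨k, hk⟩ : ∃ k : ℕ, (k : ℤ) = ((N : ℤ) - a) / 2 :=
    ⟨_, Int.toNat_of_nonneg (Int.ediv_nonneg (by omega) (by norm_num))⟩
  refine ⟨k, by omega, ?_⟩
  rw [← hk, binomZ, if_pos (by positivity), Int.toNat_natCast]

theorem pow_three_le_sq_of_le_rpow {y t : ℝ} (hy : 0 ≤ y) (ht : 0 ≤ t) (h : y ≤ t ^ (2 / 3 : ℝ)) :
    y ^ 3 ≤ t ^ 2 :=
  calc y ^ 3 ≤ (t ^ (2 / 3 : ℝ)) ^ 3 := by gcongr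
    _ = t ^ 2 := by rw [← rpow_natCast, ← rpow_mul ht]; norm_num

/-- Asymptotics of the shifted central binomial coefficient in the central region: uniformly for
`a ≡ N (mod 2)` with `|a|/2 ≤ (N/2)^{2/3}`,
`C(N, (N−a)/2) = (2^N/√(πN/2)) exp(−a²/(2N)) (1 + O((1+|a|/2)/(N/2)))`. -/
theorem central_binomial_asymptotics :
    ∃ C > (0 : ℝ), ∃ N₀ : ℕ, ∀ N : ℕ, N₀ ≤ N → ∀ a : ℤ,
      a % 2 = (N : ℤ) % 2 →
      |(a : ℝ)| / 2 ≤ ((N : ℝ) / 2) ^ ((2 : ℝ) / 3) →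
      |(binomZ N (((N : ℤ) - a) / 2) : ℝ) -
          2 ^ N / Real.sqrt (π * N / 2) * Real.exp (-(a : ℝ) ^ 2 / (2 * N))| ≤
        C * (2 ^ N / Real.sqrt ((N : ℝ) / 2)) * Real.exp (-(a : ℝ) ^ 2 / (2 * N)) *
          ((1 + |(a : ℝ)| / 2) / ((N : ℝ) / 2)) := by
  refine ⟨12, by norm_num, 2000, fun N hN a hpar hsize => ?_⟩
  have hN' : (2000 : ℝ) ≤ N := by exact_mod_cast hN
  have hcube : |(a : ℝ)| ^ 3 ≤ 2 * N ^ 2 := by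
    have := pow_three_le_sq_of_le_rpow (by positivity) (by positivity) hsize
    linarith [show (|(a : ℝ)| / 2) ^ 3 = |(a : ℝ)| ^ 3 / 8 by ring]
  have haN : a ≤ (N : ℤ) := by
    suffices (a : ℝ) ≤ N by exact_mod_cast this
    by_contra! h
    have h1 : (N : ℝ) < |(a : ℝ)| := h.trans_le (le_abs_self _)
    nlinarith [pow_lt_pow_left₀ h1 (by positivity) three_ne_zero]
  obtain ⟨k, hk2, hbinom⟩ := exists_binomZ_eq_choose hpar haN
  replace hk2 : 2 * (k : ℝ) = N - a := by exact_mod_cast hk2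
  have hN0 : (N : ℝ) ≠ 0 := by positivity
  set x : ℝ := a / N
  have hNx : (N : ℝ) * x = a := mul_div_cancel₀ _ hN0
  have hx : N * |x| ^ 3 ≤ 2 :=
    calc N * |x| ^ 3 = |(a : ℝ)| ^ 3 / N ^ 2 := by simp only [x, abs_div, Nat.abs_cast]; field_simp
      _ ≤ 2 := by rw [div_le_iff₀ (by positivity)]; exact hcube
  have hmain := abs_choose_sub_gaussApprox_le hN (by linarith : (k : ℝ) = N / 2 * (1 - x)) hx
  have hratio : (1 + |(a : ℝ)| / 2) / ((N : ℝ) / 2) = |x| + 2 / N := by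
    simp only [x, abs_div, Nat.abs_cast]; field_simp; ring
  rw [hNx] at hmain
  rw [hbinom, hratio, mul_assoc (12 : ℝ) (2 ^ N / _)]
  refine hmain.trans ?_
  gcongr
  exact gaussApprox_le (by positivity) _
end
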